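/- arXiv:1112.3827 — 2 statements merged into one kernel-verified Lean document; each statement's English description precedes it below -/
import Mathlib

section
/- For the UCB(ρ) policy with parameter ρ>0, in the environment θ=(δ_a,δ_b) with 0≤b<a≤1 and Δ=a−b, the expected regret is asymptotically equivalent to (ρ/Δ)·log n; that is, E_θ[R_n]/log n → ρ/Δ as n→∞. -/
open MeasureTheory ProbabilityTheory Filter Asymptotics

noncomputable section

namespace Bandit

/-- Empirical mean of the first `s` values of the sequence `x`. -/
def empMean (x : ℕ → ℝ) (s : ℕ) : ℝ := (∑ u ∈ Finset.range s, x u) / s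

/-- An element of `Fin K` maximizing `g`. -/
def argmaxFin {K : ℕ} (hK : 0 < K) (g : Fin K → ℝ) : Fin K :=
  (Finset.univ.exists_max_image g ⟨⟨0, hK⟩, Finset.mem_univ _⟩).choose

theorem argmaxFin_spec {K : ℕ} (hK : 0 < K) (g : Fin K → ℝ) (j : Fin K) :
    g j ≤ g (argmaxFin hK g) := by
  have h := (Finset.univ.exists_max_image g ⟨⟨0, hK⟩, Finset.mem_univ _⟩).choose_spec
  exact h.2 j (Finset.mem_univ j)

/-- The arm pulled at round `t` by a generalized UCB policy with exploration functions `f`,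
given the reward table `x` (where `x k u` is the reward of the `(u+1)`-th pull of arm `k`)
and the vector `T` of numbers of pulls of each arm before round `t`.
During the first `K` rounds (`t ≤ K`), each arm is pulled once; afterwards an arm maximizing
the UCB index `X̂_{k,T_k(t-1)} + √(f_k(t) / T_k(t-1))` is pulled. -/
def ucbArmAux {K : ℕ} (hK : 0 < K) (f : Fin K → ℕ → ℝ) (x : Fin K → ℕ → ℝ)
    (T : Fin K → ℕ) (t : ℕ) : Fin K :=
  if h : t ≤ K then ⟨t - 1, by omega⟩
  else argmaxFin hK fun j => empMean (x j) (T j) + Real.sqrt (f j t / (T j : ℝ))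

/-- `ucbCount hK f x t k` is `T_k(t)`, the number of pulls of arm `k` during rounds `1,…,t`
by the generalized UCB policy with exploration functions `f` on the reward table `x`. -/
def ucbCount {K : ℕ} (hK : 0 < K) (f : Fin K → ℕ → ℝ) (x : Fin K → ℕ → ℝ) :
    ℕ → Fin K → ℕ
  | 0, _ => 0
  | t + 1, k =>
    ucbCount hK f x t k + if ucbArmAux hK f x (ucbCount hK f x t) (t + 1) = k then 1 else 0

/-- The arm pulled at round `t ≥ 1` by the generalized UCB policy. -/
def ucbArm {K : ℕ} (hK : 0 < K) (f : Fin K → ℕ → ℝ) (x : Fin K → ℕ → ℝ) (t : ℕ) : Fin K :=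
  ucbArmAux hK f x (ucbCount hK f x (t - 1)) t

/-- The exploration function of the UCB(ρ) policy: `f_k(t) = ρ log t` for every arm. -/
def rhoLog {K : ℕ} (ρ : ℝ) : Fin K → ℕ → ℝ := fun _ t => ρ * Real.log t

/-- The reward table of the two-armed deterministic environment `θ = (δ_a, δ_b)`:
arm `0` always gives `a` and arm `1` always gives `b`. -/
def diracTable (a b : ℝ) : Fin 2 → ℕ → ℝ := fun k _ => if k = 0 then a else b

end Bandit
namespace Bandit

lemma fin2_cases (j : Fin 2) : j = 0 ∨ j = 1 := by omega

lemma empMean_const (r : ℝ) {s : ℕ} (hs : 1 ≤ s) : empMean (fun _ => r) s = r := by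
  have : (s : ℝ) ≠ 0 := by positivity
  simp only [empMean, Finset.sum_const, Finset.card_range, nsmul_eq_mul]
  field_simp

lemma ucbCount_two (f x : Fin 2 → ℕ → ℝ) (k : Fin 2) :
    ucbCount (Nat.succ_pos 1) f x 2 k = 1 := by
  fin_cases k <;> norm_num [ucbCount, ucbArmAux]

lemma ucbCount_sum (f x : Fin 2 → ℕ → ℝ) (t : ℕ) :
    ucbCount (Nat.succ_pos 1) f x t 0 + ucbCount (Nat.succ_pos 1) f x t 1 = t := by
  induction t with
  | zero => simp [ucbCount]
  | succ t ih =>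
    simp only [ucbCount]
    rcases fin2_cases (ucbArmAux (Nat.succ_pos 1) f x (ucbCount (Nat.succ_pos 1) f x t) (t + 1)) with h | h <;>
      simp [h] <;> omega

lemma ucbCount_mono (f x : Fin 2 → ℕ → ℝ) (k : Fin 2) {s t : ℕ} (h : s ≤ t) :
    ucbCount (Nat.succ_pos 1) f x s k ≤ ucbCount (Nat.succ_pos 1) f x t k := by
  induction t with
  | zero => interval_cases s; omega
  | succ t ih =>
    rcases Nat.lt_or_ge s (t+1) with h' | h'
    · exact le_trans (ih (by omega)) (by simp only [ucbCount]; exact Nat.le_add_right _ _)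
    · have hst : s = t + 1 := by omega
      subst hst; exact le_rfl

lemma one_le_ucbCount (f x : Fin 2 → ℕ → ℝ) (k : Fin 2) {t : ℕ} (ht : 2 ≤ t) :
    1 ≤ ucbCount (Nat.succ_pos 1) f x t k := by
  have := ucbCount_mono f x k ht
  rw [ucbCount_two] at this
  exact this


section Key
variable (ρ a b : ℝ)

/-- The UCB index function at round `t+1` for `t ≥ 2`. -/
lemma ucbArmAux_eq_argmax (f x : Fin 2 → ℕ → ℝ) (T : Fin 2 → ℕ) {t : ℕ} (ht : 2 ≤ t) :
    ucbArmAux (Nat.succ_pos 1) f x T (t + 1) =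
      argmaxFin (Nat.succ_pos 1)
        (fun j => empMean (x j) (T j) + Real.sqrt (f j (t + 1) / (T j : ℝ))) := by
  rw [ucbArmAux, dif_neg (by omega)]

lemma empMean_dirac_zero {s : ℕ} (hs : 1 ≤ s) : empMean (diracTable a b 0) s = a := by
  have : diracTable a b 0 = fun _ => a := by funext u; simp [diracTable]
  rw [this, empMean_const _ hs]

lemma empMean_dirac_one {s : ℕ} (hs : 1 ≤ s) : empMean (diracTable a b 1) s = b := by
  have : diracTable a b 1 = fun _ => b := by funext u; simp [diracTable]
  rw [this, empMean_const _ hs]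

/-- If arm 1 is pulled at round `t+1` (for `t ≥ 2`), its count was small. -/
lemma arm_one_bound (hρ : 0 < ρ) (hba : b < a) {t : ℕ} (ht : 2 ≤ t)
    (harm : ucbArmAux (Nat.succ_pos 1) (rhoLog ρ) (diracTable a b)
      (ucbCount (Nat.succ_pos 1) (rhoLog ρ) (diracTable a b) t) (t + 1) = 1) :
    (ucbCount (Nat.succ_pos 1) (rhoLog ρ) (diracTable a b) t 1 : ℝ) * (a - b) ^ 2 ≤
      ρ * Real.log (t + 1) := by
  set T := ucbCount (Nat.succ_pos 1) (rhoLog ρ) (diracTable a b) t with hT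
  have hT0 : 1 ≤ T 0 := one_le_ucbCount _ _ _ ht
  have hT1 : 1 ≤ T 1 := one_le_ucbCount _ _ _ ht
  rw [ucbArmAux_eq_argmax _ _ _ ht] at harm
  have hspec := argmaxFin_spec (Nat.succ_pos 1)
    (fun j => empMean (diracTable a b j) (T j) +
      Real.sqrt (rhoLog ρ j (t + 1) / (T j : ℝ))) 0
  rw [harm] at hspec
  simp only [empMean_dirac_zero, empMean_dirac_one, hT0, hT1, rhoLog] at hspec
  have hlog : 0 ≤ Real.log (t + 1 : ℕ) := Real.log_nonneg (by exact_mod_cast Nat.le_add_left 1 t)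
  have hy : 0 ≤ ρ * Real.log (t + 1 : ℕ) / (T 1 : ℝ) := by positivity
  have hab : a - b ≤ Real.sqrt (ρ * Real.log (t + 1 : ℕ) / (T 1 : ℝ)) := by
    have := Real.sqrt_nonneg (ρ * Real.log (t + 1 : ℕ) / (T 0 : ℝ))
    linarith
  have hsq : (a - b) ^ 2 ≤ ρ * Real.log (t + 1 : ℕ) / (T 1 : ℝ) :=
    (Real.le_sqrt (by linarith) hy).mp hab
  have hT1pos : (0 : ℝ) < (T 1 : ℝ) := by exact_mod_cast hT1
  rw [le_div_iff₀ hT1pos] at hsq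
  push_cast at hsq ⊢
  linarith

/-- If arm 0 is pulled at round `t+1` (for `t ≥ 2`) and the exploration term of arm 0
is at most `ε`, then arm 1's count was already large. -/
lemma arm_zero_bound (hρ : 0 < ρ) (hba : b < a) {ε : ℝ} (hε : 0 < ε) {t : ℕ} (ht : 2 ≤ t)
    (harm : ucbArmAux (Nat.succ_pos 1) (rhoLog ρ) (diracTable a b)
      (ucbCount (Nat.succ_pos 1) (rhoLog ρ) (diracTable a b) t) (t + 1) = 0)
    (hE : ρ * Real.log (t + 1) ≤
      ε ^ 2 * (ucbCount (Nat.succ_pos 1) (rhoLog ρ) (diracTable a b) t 0 : ℝ)) :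
    ρ * Real.log (t + 1) ≤
      (a - b + ε) ^ 2 * (ucbCount (Nat.succ_pos 1) (rhoLog ρ) (diracTable a b) t 1 : ℝ) := by
  set T := ucbCount (Nat.succ_pos 1) (rhoLog ρ) (diracTable a b) t with hT
  have hT0 : 1 ≤ T 0 := one_le_ucbCount _ _ _ ht
  have hT1 : 1 ≤ T 1 := one_le_ucbCount _ _ _ ht
  have hT0pos : (0 : ℝ) < (T 0 : ℝ) := by exact_mod_cast hT0
  have hT1pos : (0 : ℝ) < (T 1 : ℝ) := by exact_mod_cast hT1
  rw [ucbArmAux_eq_argmax _ _ _ ht] at harm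
  have hspec := argmaxFin_spec (Nat.succ_pos 1)
    (fun j => empMean (diracTable a b j) (T j) +
      Real.sqrt (rhoLog ρ j (t + 1) / (T j : ℝ))) 1
  rw [harm] at hspec
  simp only [empMean_dirac_zero, empMean_dirac_one, hT0, hT1, rhoLog] at hspec
  have hcast : ((t + 1 : ℕ) : ℝ) = (t : ℝ) + 1 := by push_cast; ring
  rw [hcast] at hspec
  have h0le : ρ * Real.log ((t : ℝ) + 1) / (T 0 : ℝ) ≤ ε ^ 2 := by
    rw [div_le_iff₀ hT0pos]; linarith [hE]
  have h0 : Real.sqrt (ρ * Real.log ((t : ℝ) + 1) / (T 0 : ℝ)) ≤ ε := by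
    calc Real.sqrt (ρ * Real.log ((t : ℝ) + 1) / (T 0 : ℝ)) ≤ Real.sqrt (ε ^ 2) :=
          Real.sqrt_le_sqrt h0le
      _ = ε := Real.sqrt_sq hε.le
  have h1 : Real.sqrt (ρ * Real.log ((t : ℝ) + 1) / (T 1 : ℝ)) ≤ a - b + ε := by linarith
  have := (Real.sqrt_le_left (by linarith)).mp h1
  rw [div_le_iff₀ hT1pos] at this
  linarith

/-- Upper bound on the number of pulls of arm 1. -/
lemma count_upper (hρ : 0 < ρ) (hba : b < a) :
    ∀ n : ℕ, 2 ≤ n →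
      (ucbCount (Nat.succ_pos 1) (rhoLog ρ) (diracTable a b) n 1 : ℝ) ≤
        ρ / (a - b) ^ 2 * Real.log n + 1 := by
  have hΔ : (0:ℝ) < (a - b) ^ 2 := pow_pos (sub_pos.2 hba) 2
  have hc : (0:ℝ) ≤ ρ / (a - b) ^ 2 := div_nonneg hρ.le hΔ.le
  intro n hn
  induction n, hn using Nat.le_induction with
  | base =>
    rw [ucbCount_two]
    have h1 : (0:ℝ) ≤ Real.log ((2:ℕ):ℝ) := Real.log_nonneg (by norm_num)
    push_cast
    nlinarith [mul_nonneg hc h1]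
  | succ n hn ih =>
    have hnpos : (0:ℝ) < (n:ℝ) := by
      have : (2:ℝ) ≤ (n:ℝ) := by exact_mod_cast hn
      linarith
    have hloglog : Real.log (n:ℝ) ≤ Real.log ((n:ℝ) + 1) :=
      Real.log_le_log hnpos (by linarith)
    have hcast : ((n+1:ℕ):ℝ) = (n:ℝ) + 1 := by push_cast; ring
    rcases fin2_cases (ucbArmAux (Nat.succ_pos 1) (rhoLog ρ) (diracTable a b)
        (ucbCount (Nat.succ_pos 1) (rhoLog ρ) (diracTable a b) n) (n + 1)) with h | h
    · have heq : ucbCount (Nat.succ_pos 1) (rhoLog ρ) (diracTable a b) (n+1) 1 =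
          ucbCount (Nat.succ_pos 1) (rhoLog ρ) (diracTable a b) n 1 := by
        simp [ucbCount, h]
      rw [heq, hcast]
      nlinarith
    · have hkey := arm_one_bound ρ a b hρ hba hn h
      have heq : ucbCount (Nat.succ_pos 1) (rhoLog ρ) (diracTable a b) (n+1) 1 =
          ucbCount (Nat.succ_pos 1) (rhoLog ρ) (diracTable a b) n 1 + 1 := by
        simp [ucbCount, h]
      rw [heq, hcast]
      push_cast
      have : (ucbCount (Nat.succ_pos 1) (rhoLog ρ) (diracTable a b) n 1 : ℝ) ≤
          ρ / (a - b)^2 * Real.log ((n:ℝ) + 1) := by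
        rw [div_mul_eq_mul_div, le_div_iff₀ hΔ]; linarith
      linarith

/-- Eventually the exploration term of arm 0 is at most `ε`. -/
lemma explore_small (hρ : 0 < ρ) (hba : b < a) {ε : ℝ} (hε : 0 < ε) :
    ∀ᶠ t : ℕ in atTop, ρ * Real.log ((t:ℝ) + 1) ≤
      ε ^ 2 * (ucbCount (Nat.succ_pos 1) (rhoLog ρ) (diracTable a b) t 0 : ℝ) := by
  set c := ρ / (a - b) ^ 2 with hcdef
  have hΔ : (0:ℝ) < (a - b) ^ 2 := pow_pos (sub_pos.2 hba) 2
  have hc : (0:ℝ) ≤ c := div_nonneg hρ.le hΔ.le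
  have hF : (fun s : ℝ => (ρ + ε^2*c) * Real.log s + (ρ + ε^2)) =o[atTop] (id : ℝ → ℝ) :=
    (Real.isLittleO_log_id_atTop.const_mul_left _).add (isLittleO_const_id_atTop _)
  have hb' := hF.def (by positivity : (0:ℝ) < ε^2)
  have hev : ∀ᶠ t : ℕ in atTop,
      ‖(ρ + ε^2*c) * Real.log (t:ℝ) + (ρ + ε^2)‖ ≤ ε^2 * ‖(t:ℝ)‖ :=
    tendsto_natCast_atTop_atTop.eventually hb'
  filter_upwards [hev, eventually_ge_atTop 2] with t hFt ht2
  have ht2' : (2:ℝ) ≤ (t:ℝ) := by exact_mod_cast ht2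
  have htpos : (0:ℝ) < (t:ℝ) := by linarith
  have hlog1 : Real.log ((t:ℝ) + 1) ≤ Real.log (t:ℝ) + 1 := by
    have h2t : (t:ℝ) + 1 ≤ 2 * t := by linarith
    have := Real.log_le_log (by linarith : (0:ℝ) < (t:ℝ) + 1) h2t
    rw [Real.log_mul (by norm_num) (by linarith)] at this
    have hl2 : Real.log 2 ≤ 1 := by
      have := Real.log_le_sub_one_of_pos (by norm_num : (0:ℝ) < 2)
      linarith
    linarith
  have hU : (ucbCount (Nat.succ_pos 1) (rhoLog ρ) (diracTable a b) t 1 : ℝ) ≤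
      c * Real.log (t:ℝ) + 1 := by
    exact count_upper ρ a b hρ hba t ht2
  have hsum : (ucbCount (Nat.succ_pos 1) (rhoLog ρ) (diracTable a b) t 0 : ℝ) +
      (ucbCount (Nat.succ_pos 1) (rhoLog ρ) (diracTable a b) t 1 : ℝ) = (t:ℝ) := by
    exact_mod_cast congrArg (Nat.cast : ℕ → ℝ) (ucbCount_sum (rhoLog ρ) (diracTable a b) t)
  have h2 : (ρ + ε^2*c) * Real.log (t:ℝ) + (ρ + ε^2) ≤ ε^2 * (t:ℝ) := by
    rw [Real.norm_eq_abs, Real.norm_eq_abs, abs_of_pos htpos] at hFt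
    exact (le_abs_self _).trans hFt
  have hρlog : ρ * Real.log ((t:ℝ)+1) ≤ ρ * Real.log (t:ℝ) + ρ := by nlinarith
  nlinarith [sq_nonneg ε]

/-- Lower bound on the number of pulls of arm 1. -/
lemma count_lower (hρ : 0 < ρ) (hba : b < a) {ε : ℝ} (hε : 0 < ε) :
    ∃ C : ℝ, ∀ᶠ n : ℕ in atTop,
      ρ / (a - b + ε) ^ 2 * Real.log (n:ℝ) - C ≤
        (ucbCount (Nat.succ_pos 1) (rhoLog ρ) (diracTable a b) n 1 : ℝ) := by
  set d := ρ / (a - b + ε) ^ 2 with hddef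
  have hS : (0:ℝ) < (a - b + ε) ^ 2 := pow_pos (by linarith) 2
  have hd : (0:ℝ) < d := div_pos hρ hS
  have hev : ∀ᶠ t : ℕ in atTop,
      (ρ * Real.log ((t:ℝ) + 1) ≤
        ε ^ 2 * (ucbCount (Nat.succ_pos 1) (rhoLog ρ) (diracTable a b) t 0 : ℝ)) ∧
      2 ≤ t ∧ d ≤ (t:ℝ) :=
    (explore_small ρ a b hρ hba hε).and ((eventually_ge_atTop 2).and
      (tendsto_natCast_atTop_atTop.eventually_ge_atTop d))
  obtain ⟨N, hN⟩ := eventually_atTop.1 hev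
  refine ⟨max 1 (d * Real.log ((N:ℝ) + 1)), ?_⟩
  set C := max 1 (d * Real.log ((N:ℝ) + 1)) with hCdef
  have hC1 : (1:ℝ) ≤ C := le_max_left _ _
  have key : ∀ n : ℕ, N ≤ n →
      d * Real.log ((n:ℝ) + 1) - C ≤
        (ucbCount (Nat.succ_pos 1) (rhoLog ρ) (diracTable a b) n 1 : ℝ) := by
    intro n hn
    induction n, hn using Nat.le_induction with
    | base =>
      have : d * Real.log ((N:ℝ) + 1) - C ≤ 0 := by
        have := le_max_right (1:ℝ) (d * Real.log ((N:ℝ) + 1)); linarith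
      exact this.trans (by positivity)
    | succ n hn ih =>
      obtain ⟨hE, hn2, hdn⟩ := hN n hn
      have hn2' : (2:ℝ) ≤ (n:ℝ) := by exact_mod_cast hn2
      -- the increment of d * log is at most 1
      have hincr : d * Real.log ((n:ℝ) + 2) ≤ d * Real.log ((n:ℝ) + 1) + 1 := by
        have hpos1 : (0:ℝ) < (n:ℝ) + 1 := by linarith
        have hpos2 : (0:ℝ) < (n:ℝ) + 2 := by linarith
        have hlf := Real.log_le_sub_one_of_pos (div_pos hpos2 hpos1)
        rw [Real.log_div hpos2.ne' hpos1.ne'] at hlf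
        have hq : ((n:ℝ) + 2) / ((n:ℝ) + 1) - 1 = 1 / ((n:ℝ) + 1) := by
          field_simp; norm_num
        rw [hq] at hlf
        have h2 : d * (Real.log ((n:ℝ)+2) - Real.log ((n:ℝ)+1)) ≤ d * (1 / ((n:ℝ)+1)) :=
          mul_le_mul_of_nonneg_left hlf hd.le
        have h3 : d * (1 / ((n:ℝ)+1)) ≤ 1 := by
          rw [mul_one_div]
          exact (div_le_one hpos1).2 (by linarith)
        nlinarith
      have hcast : ((n+1:ℕ):ℝ) + 1 = (n:ℝ) + 2 := by push_cast; ring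
      rcases fin2_cases (ucbArmAux (Nat.succ_pos 1) (rhoLog ρ) (diracTable a b)
          (ucbCount (Nat.succ_pos 1) (rhoLog ρ) (diracTable a b) n) (n + 1)) with h | h
      · have hkey := arm_zero_bound ρ a b hρ hba hε hn2 h hE
        have hlb : d * Real.log ((n:ℝ) + 1) ≤
            (ucbCount (Nat.succ_pos 1) (rhoLog ρ) (diracTable a b) n 1 : ℝ) := by
          rw [hddef, div_mul_eq_mul_div, div_le_iff₀ hS]
          linarith
        have heq : ucbCount (Nat.succ_pos 1) (rhoLog ρ) (diracTable a b) (n+1) 1 =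
            ucbCount (Nat.succ_pos 1) (rhoLog ρ) (diracTable a b) n 1 := by
          simp [ucbCount, h]
        rw [heq, hcast]
        linarith
      · have heq : ucbCount (Nat.succ_pos 1) (rhoLog ρ) (diracTable a b) (n+1) 1 =
            ucbCount (Nat.succ_pos 1) (rhoLog ρ) (diracTable a b) n 1 + 1 := by
          simp [ucbCount, h]
        rw [heq, hcast]
        push_cast
        linarith
  rw [eventually_atTop]
  refine ⟨max N 1, fun n hn => ?_⟩
  have hn1 : 1 ≤ n := le_trans (le_max_right _ _) hn
  have hlog : Real.log (n:ℝ) ≤ Real.log ((n:ℝ) + 1) := by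
    have : (0:ℝ) < (n:ℝ) := by exact_mod_cast hn1
    exact Real.log_le_log this (by linarith)
  have := key n (le_trans (le_max_left _ _) hn)
  nlinarith

lemma count_div_log_tendsto (hρ : 0 < ρ) (hba : b < a) :
    Tendsto (fun n : ℕ =>
        (ucbCount (Nat.succ_pos 1) (rhoLog ρ) (diracTable a b) n 1 : ℝ) / Real.log n)
      atTop (nhds (ρ / (a - b) ^ 2)) := by
  have hlogT : Tendsto (fun n : ℕ => Real.log n) atTop atTop :=
    Real.tendsto_log_atTop.comp tendsto_natCast_atTop_atTop
  set c := ρ / (a - b) ^ 2 with hcdef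
  refine tendsto_order.2 ⟨?_, ?_⟩
  · -- lower bound
    intro l hl
    obtain ⟨ε, hεpos, hεl⟩ : ∃ ε : ℝ, 0 < ε ∧ l < ρ / (a - b + ε) ^ 2 := by
      have hcont : ContinuousAt (fun e : ℝ => ρ / (a - b + e) ^ 2) 0 := by
        apply ContinuousAt.div continuousAt_const (by fun_prop)
        simpa using pow_ne_zero 2 (by linarith : a - b + 0 ≠ 0)
      have htd := hcont.tendsto
      have h0 : ρ / (a - b + 0) ^ 2 = c := by norm_num [hcdef]
      rw [h0] at htd
      have hev := htd.eventually (eventually_gt_nhds hl)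
      obtain ⟨ε, hε1, hε2⟩ := ((hev.filter_mono nhdsWithin_le_nhds).and
        (eventually_mem_nhdsWithin (a := (0:ℝ)) (s := Set.Ioi 0))).exists
      exact ⟨ε, hε2, hε1⟩
    obtain ⟨C, hC⟩ := count_lower ρ a b hρ hba hεpos
    set d := ρ / (a - b + ε) ^ 2 with hddef
    filter_upwards [hC, hlogT.eventually_gt_atTop (max 0 (C / (d - l)))] with n h1 h2
    have h3 : (0:ℝ) < Real.log n := lt_of_le_of_lt (le_max_left _ _) h2
    rw [lt_div_iff₀ h3]
    have h4 : C / (d - l) < Real.log n := lt_of_le_of_lt (le_max_right _ _) h2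
    have h5 : C < (d - l) * Real.log n := by
      rw [div_lt_iff₀ (by linarith : (0:ℝ) < d - l)] at h4; linarith
    nlinarith
  · -- upper bound
    intro u hu
    filter_upwards [eventually_ge_atTop 2, hlogT.eventually_gt_atTop (max 0 (1 / (u - c)))]
      with n h1 h2
    have hlogpos : (0:ℝ) < Real.log n := lt_of_le_of_lt (le_max_left _ _) h2
    have hU := count_upper ρ a b hρ hba n h1
    rw [div_lt_iff₀ hlogpos]
    have h4 : 1 / (u - c) < Real.log n := lt_of_le_of_lt (le_max_right _ _) h2
    have h5 : 1 < (u - c) * Real.log n := by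
      rw [div_lt_iff₀ (by linarith : (0:ℝ) < u - c)] at h4; linarith
    nlinarith
end Key

/-- For UCB(ρ) with ρ > 0 in the environment θ = (δ_a, δ_b) with
0 ≤ b < a ≤ 1 and Δ = a - b, the expected regret E_θ[R_n] = Δ·T_2(n) is asymptotically
equivalent to (ρ/Δ)·log n: E_θ[R_n]/log n → ρ/Δ as n → ∞. -/
theorem ucbRho_dirac_regret_asymptotics
    (ρ : ℝ) (hρ : 0 < ρ) (a b : ℝ) (hb : 0 ≤ b) (hba : b < a) (ha : a ≤ 1)
    (Δ : ℝ) (hΔ : Δ = a - b) :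
    Filter.Tendsto
      (fun n : ℕ =>
        Δ * (ucbCount (Nat.succ_pos 1) (rhoLog ρ) (diracTable a b) n 1 : ℝ) / Real.log n)
      Filter.atTop (nhds (ρ / Δ)) := by
  have hΔpos : 0 < Δ := by rw [hΔ]; linarith
  have hfun : (fun n : ℕ =>
      Δ * (ucbCount (Nat.succ_pos 1) (rhoLog ρ) (diracTable a b) n 1 : ℝ) / Real.log n) =
      fun n : ℕ => Δ * ((ucbCount (Nat.succ_pos 1) (rhoLog ρ) (diracTable a b) n 1 : ℝ) /
        Real.log n) := by
    funext n; ring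
  have hval : ρ / Δ = Δ * (ρ / (a - b) ^ 2) := by
    have hne : a - b ≠ 0 := by rw [hΔ] at hΔpos; linarith
    rw [hΔ]; field_simp
  rw [hfun, hval]
  exact (count_div_log_tendsto ρ a b hρ hba).const_mul Δ

end Bandit
end
end

section
/- Let ρ>0 and K<t≤n. If the UCB(ρ) policy selects a suboptimal arm k (i.e. Δ_k>0) at round t, then at least one of the following three events holds: (i) X̂_{k*,T_{k*}(t−1)} + √(ρ log t/T_{k*}(t−1)) ≤ μ*; (ii) X̂_{k,T_k(t−1)} ≥ μ_k + √(ρ log t/T_k(t−1)); (iii) T_k(t−1) < 4ρ·log n/Δ_k². -/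
/-!
If (i) fails, the UCB index of `k*` exceeds `μ*`; since `k` was selected, its index is at least
as large. If (ii) fails, that index is below `μ_k` plus twice the width `√(ρ log t / T_k(t-1))`.
Together, `Δ_k < 2 √(ρ log t / T_k(t-1))`, i.e. `T_k(t-1) < 4ρ log t / Δ_k² ≤ 4ρ log n / Δ_k²`.
-/

open MeasureTheory ProbabilityTheory Filter Asymptotics

noncomputable section

namespace Bandit

/-- `ν` is a valid bandit environment: each arm's reward distribution is a probability
measure on `[0,1]`. -/
def IsEnv {K : ℕ} (ν : Fin K → Measure ℝ) : Prop :=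
  ∀ k, IsProbabilityMeasure (ν k) ∧ ν k (Set.Icc 0 1) = 1

/-- The mean of a reward distribution. -/
def mean (ν : Measure ℝ) : ℝ := ∫ x, x ∂ν

/-- `μ* = max_k μ_k`, the best mean reward of the environment `ν`. -/
def bestMean {K : ℕ} (hK : 0 < K) (ν : Fin K → Measure ℝ) : ℝ :=
  Finset.univ.sup' ⟨⟨0, hK⟩, Finset.mem_univ _⟩ fun k => mean (ν k)

/-- `Δ_k = μ* - μ_k`, the optimality gap of arm `k` in the environment `ν`. -/
def gap {K : ℕ} (hK : 0 < K) (ν : Fin K → Measure ℝ) (k : Fin K) : ℝ :=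
  bestMean hK ν - mean (ν k)

/-- `X` is a reward table process on `(Ω, P)` for the environment `ν`: the random variables
`X k u` (the reward of the `(u+1)`-th pull of arm `k`) are mutually independent, take values
in `[0,1]`, and `X k u` has distribution `ν k` for every `u`. -/
def IsRewardTable {K : ℕ} {Ω : Type*} [MeasurableSpace Ω] (P : Measure Ω)
    (ν : Fin K → Measure ℝ) (X : Fin K → ℕ → Ω → ℝ) : Prop :=
  (∀ k u, Measurable (X k u)) ∧
  (∀ k u ω, X k u ω ∈ Set.Icc (0 : ℝ) 1) ∧
  (∀ k u, Measure.map (X k u) P = ν k) ∧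
  iIndepFun (fun p : Fin K × ℕ => X p.1 p.2) P

/-- `E_θ[T_k(n)]`, the expected number of pulls of arm `k` up to round `n`, for the
generalized UCB policy with exploration functions `f`. -/
def ucbExpCount {K : ℕ} (hK : 0 < K) (f : Fin K → ℕ → ℝ) {Ω : Type*} [MeasurableSpace Ω]
    (P : Measure Ω) (X : Fin K → ℕ → Ω → ℝ) (n : ℕ) (k : Fin K) : ℝ :=
  ∫ ω, (ucbCount hK f (fun j u => X j u ω) n k : ℝ) ∂P

/-- `E_θ[R_n] = ∑_k Δ_k E_θ[T_k(n)]`, the expected regret at horizon `n` of the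
generalized UCB policy with exploration functions `f` in the environment `ν`. -/
def ucbRegret {K : ℕ} (hK : 0 < K) (f : Fin K → ℕ → ℝ) {Ω : Type*} [MeasurableSpace Ω]
    (P : Measure Ω) (ν : Fin K → Measure ℝ) (X : Fin K → ℕ → Ω → ℝ) (n : ℕ) : ℝ :=
  ∑ k, gap hK ν k * ucbExpCount hK f P X n k

end Bandit
namespace Bandit

/-- The family `Θ_k` of sets of admissible reward distributions per arm, as in the paper:
each `Θ_k` consists of probability measures on `[0,1]` and contains every two-point
distribution `p δ_a + (1-p) δ_b` with `p, a, b ∈ [0,1]`. -/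
def Admissible {K : ℕ} (Θk : Fin K → Set (Measure ℝ)) : Prop :=
  (∀ k, ∀ ν ∈ Θk k, IsProbabilityMeasure ν ∧ ν (Set.Icc 0 1) = 1) ∧
  (∀ k, ∀ p a b : ℝ, p ∈ Set.Icc (0 : ℝ) 1 → a ∈ Set.Icc (0 : ℝ) 1 → b ∈ Set.Icc (0 : ℝ) 1 →
    ENNReal.ofReal p • Measure.dirac a + ENNReal.ofReal (1 - p) • Measure.dirac b ∈ Θk k)

/-- `Θ = Θ_1 × … × Θ_K`, the set of admissible environments. -/
def envSet {K : ℕ} (Θk : Fin K → Set (Measure ℝ)) : Set (Fin K → Measure ℝ) :=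
  {θ | ∀ k, θ k ∈ Θk k}

def ucbIndex {K : ℕ} (hK : 0 < K) (f : Fin K → ℕ → ℝ) (x : Fin K → ℕ → ℝ) (t : ℕ)
    (j : Fin K) : ℝ :=
  empMean (x j) (ucbCount hK f x (t - 1) j) +
    Real.sqrt (f j t / (ucbCount hK f x (t - 1) j : ℝ))

theorem ucbIndex_le_of_ucbArm_eq {K : ℕ} (hK : 0 < K) (f : Fin K → ℕ → ℝ)
    (x : Fin K → ℕ → ℝ) {t : ℕ} (ht : K < t) {k : Fin K} (hsel : ucbArm hK f x t = k)
    (j : Fin K) : ucbIndex hK f x t j ≤ ucbIndex hK f x t k := by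
  rw [ucbArm, ucbArmAux, dif_neg ht.not_ge] at hsel
  exact hsel ▸ argmaxFin_spec hK _ j

theorem sq_lt_four_mul_of_lt_two_mul_sqrt {Δ a : ℝ} (hΔ : 0 < Δ) (h : Δ < 2 * √a) :
    Δ ^ 2 < 4 * a := by
  have h' : Δ / 2 < √a := by linarith
  rw [Real.lt_sqrt (by positivity)] at h'
  linarith

/-- At `s = 0` the width `√(a / s)` is the junk value `√0 = 0`, so `h` cannot hold. -/
theorem lt_four_mul_div_sq_of_lt_two_mul_sqrt_div {Δ a s : ℝ} (hΔ : 0 < Δ) (hs : 0 ≤ s)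
    (h : Δ < 2 * √(a / s)) : s < 4 * a / Δ ^ 2 := by
  have hsq := sq_lt_four_mul_of_lt_two_mul_sqrt hΔ h
  obtain rfl | hpos := hs.eq_or_lt
  · simp only [div_zero, mul_zero] at hsq
    exact absurd hsq (sq_nonneg Δ).not_gt
  rw [lt_div_iff₀ (by positivity)]
  rw [mul_div_assoc', lt_div_iff₀ hpos] at hsq
  linarith

theorem ucbRho_suboptimal_selection_trichotomy_general
    (K : ℕ) (hK : 0 < K)
    (ρ : ℝ) (hρ : 0 < ρ)
    (ν : Fin K → Measure ℝ)
    (x : Fin K → ℕ → ℝ)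
    (kstar k : Fin K)
    (hk : 0 < gap hK ν k)
    (t n : ℕ) (hKt : K < t) (htn : t ≤ n)
    (hsel : ucbArm hK (rhoLog ρ) x t = k) :
    empMean (x kstar) (ucbCount hK (rhoLog ρ) x (t - 1) kstar) +
        Real.sqrt (ρ * Real.log t / (ucbCount hK (rhoLog ρ) x (t - 1) kstar : ℝ)) ≤
      bestMean hK ν ∨
    mean (ν k) +
        Real.sqrt (ρ * Real.log t / (ucbCount hK (rhoLog ρ) x (t - 1) k : ℝ)) ≤
      empMean (x k) (ucbCount hK (rhoLog ρ) x (t - 1) k) ∨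
    (ucbCount hK (rhoLog ρ) x (t - 1) k : ℝ) < 4 * ρ * Real.log n / gap hK ν k ^ 2 := by
  refine or_iff_not_imp_left.2 fun hopt => or_iff_not_imp_left.2 fun hsub => ?_
  push Not at hopt hsub
  have hle := ucbIndex_le_of_ucbArm_eq hK (rhoLog ρ) x hKt hsel kstar
  dsimp only [ucbIndex, rhoLog] at hle
  set T := ucbCount hK (rhoLog ρ) x (t - 1)
  have hgap : gap hK ν k < 2 * √(ρ * Real.log t / T k) := by
    rw [gap]
    linarith
  calc (T k : ℝ) < 4 * (ρ * Real.log t) / gap hK ν k ^ 2 :=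
        lt_four_mul_div_sq_of_lt_two_mul_sqrt_div hk (Nat.cast_nonneg _) hgap
    _ ≤ 4 * ρ * Real.log n / gap hK ν k ^ 2 := by
        rw [← mul_assoc]
        gcongr
        exact Nat.cast_pos.2 (by omega)

/-- Let ρ > 0 and K < t ≤ n. If the UCB(ρ) policy selects a suboptimal
arm k (Δ_k > 0) at round t, then (i) X̂_{k*,T_{k*}(t-1)} + √(ρ log t/T_{k*}(t-1)) ≤ μ*, or
(ii) X̂_{k,T_k(t-1)} ≥ μ_k + √(ρ log t/T_k(t-1)), or (iii) T_k(t-1) < 4ρ log n/Δ_k². -/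
theorem ucbRho_suboptimal_selection_trichotomy
    (K : ℕ) (hK : 0 < K) (hK2 : 2 ≤ K)
    (ρ : ℝ) (hρ : 0 < ρ)
    (ν : Fin K → Measure ℝ) (hν : IsEnv ν)
    (x : Fin K → ℕ → ℝ)
    (kstar k : Fin K) (hkstar : mean (ν kstar) = bestMean hK ν)
    (hk : 0 < gap hK ν k)
    (t n : ℕ) (hKt : K < t) (htn : t ≤ n)
    (hsel : ucbArm hK (rhoLog ρ) x t = k) :
    empMean (x kstar) (ucbCount hK (rhoLog ρ) x (t - 1) kstar) +
        Real.sqrt (ρ * Real.log t / (ucbCount hK (rhoLog ρ) x (t - 1) kstar : ℝ)) ≤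
      bestMean hK ν ∨
    mean (ν k) +
        Real.sqrt (ρ * Real.log t / (ucbCount hK (rhoLog ρ) x (t - 1) k : ℝ)) ≤
      empMean (x k) (ucbCount hK (rhoLog ρ) x (t - 1) k) ∨
    (ucbCount hK (rhoLog ρ) x (t - 1) k : ℝ) < 4 * ρ * Real.log n / gap hK ν k ^ 2 :=
  ucbRho_suboptimal_selection_trichotomy_general K hK ρ hρ ν x kstar k hk t n hKt htn hsel

end Bandit
end
end
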